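/- Let E, α_1, …, α_g and γ_2, …, γ_g be complex constants, and set γ_1 := 0 and γ_{g+1} := 0. If Φ : ℝ^g → ℂ is smooth and satisfies 𝓛Φ = E·Φ and 𝓤_kΦ = α_k·Φ for all k = 1, …, g, then the function Φ̃ := Φ · exp(γ_2 t_2 + … + γ_g t_g) satisfies 𝓛Φ̃ = E·Φ̃ and 𝓤_kΦ̃ = (α_k + E·γ_k − γ_{k+1})·Φ̃ for all k = 1, …, g. -/

import Mathlib

open scoped BigOperators

/-- Partial derivative `∂_i` (1-based index) on functions of `t : Fin g → ℝ`;
`∂_i ≡ 0` for `i = 0` or `i > g` (in particular `∂_{g+1} ≡ 0`). -/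
noncomputable def pd {g : ℕ} {E : Type*} [NormedAddCommGroup E] [NormedSpace ℝ E]
    (i : ℕ) (f : (Fin g → ℝ) → E) : (Fin g → ℝ) → E :=
  fun t => if h : 1 ≤ i ∧ i ≤ g then
    fderiv ℝ f t (Pi.single (⟨i - 1, by omega⟩ : Fin g) 1) else 0

/-- The Schrödinger operator `𝓛 f = ∂_x² f − u₁·f` on complex-valued functions. -/
noncomputable def opLC {g : ℕ} (u : ℕ → (Fin g → ℝ) → ℝ)
    (f : (Fin g → ℝ) → ℂ) : (Fin g → ℝ) → ℂ :=
  fun t => pd 1 (pd 1 f) t - u 1 t • f t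

/-- `𝓐_k f = ∂_x²∂_k f − (1/2)(u₁·∂_k f + ∂_k(u₁·f)) − (1/4)(u_k·∂_x f + ∂_x(u_k·f))`
on complex-valued functions. -/
noncomputable def opAC {g : ℕ} (u : ℕ → (Fin g → ℝ) → ℝ) (k : ℕ)
    (f : (Fin g → ℝ) → ℂ) : (Fin g → ℝ) → ℂ :=
  fun t => pd 1 (pd 1 (pd k f)) t
    - (1/2 : ℝ) • (u 1 t • pd k f t + pd k (fun s => u 1 s • f s) t)
    - (1/4 : ℝ) • (u k t • pd 1 f t + pd 1 (fun s => u k s • f s) t)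

/-- `𝓤_k f = 𝓐_k f − ∂_{k+1} f` on complex-valued functions. -/
noncomputable def opUC {g : ℕ} (u : ℕ → (Fin g → ℝ) → ℝ) (k : ℕ)
    (f : (Fin g → ℝ) → ℂ) : (Fin g → ℝ) → ℂ :=
  fun t => opAC u k f t - pd (k+1) f t

/-- The coordinate `t_k` (1-based); `0` for `k = 0` or `k > g`. -/
noncomputable def coord (g : ℕ) (k : ℕ) (t : Fin g → ℝ) : ℝ :=
  if h : 1 ≤ k ∧ k ≤ g then t ⟨k - 1, by omega⟩ else 0

/-- The twisted function `Φ̃ = Φ·exp(γ_2 t_2 + … + γ_g t_g)`. -/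
noncomputable def twist {g : ℕ} (γ : ℕ → ℂ) (Φ : (Fin g → ℝ) → ℂ) :
    (Fin g → ℝ) → ℂ :=
  fun t => Φ t * Complex.exp (∑ k ∈ Finset.Icc 2 g, γ k * (coord g k t : ℂ))

/-!
Write `Φ̃ = Φ · e` with `e = exp ψ`, `ψ = γ₂ t₂ + ⋯ + γ_g t_g`. Then `∂_j e = c_j e`, where
`c_j = γ_j` for `2 ≤ j ≤ g` and `c_j = 0` otherwise, so `∂_j (f e) = (∂_j f + c_j f) e`; since
`c₁ = 0`, `∂_x` commutes with multiplication by `e`. Hence `𝓛 (f e) = (𝓛 f) e`, and expanding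
`∂_x² ∂_k` gives `𝓐_k (f e) = (𝓐_k f + c_k 𝓛 f) e`, so
`𝓤_k (f e) = (𝓤_k f + c_k 𝓛 f - c_{k+1} f) e`. The conventions `γ₁ = γ_{g+1} = 0` give
`c_k = γ_k` and `c_{k+1} = γ_{k+1}` for `1 ≤ k ≤ g`.
-/

open Finset

section PartialDerivative

variable {g : ℕ} {F : Type*} [NormedAddCommGroup F] [NormedSpace ℝ F]
  {𝔸 : Type*} [NormedCommRing 𝔸] [NormedAlgebra ℝ 𝔸] {j : ℕ} {t : Fin g → ℝ}

lemma contDiff_pd {n m : WithTop ℕ∞} {f : (Fin g → ℝ) → F} (hf : ContDiff ℝ n f)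
    (hmn : m + 1 ≤ n) (j : ℕ) : ContDiff ℝ m (pd j f) := by
  unfold pd
  by_cases hj : 1 ≤ j ∧ j ≤ g
  · simp only [dif_pos hj]
    exact (hf.fderiv_right hmn).clm_apply contDiff_const
  · simp only [dif_neg hj]
    exact contDiff_const

lemma differentiable_pd {n : WithTop ℕ∞} {f : (Fin g → ℝ) → F} (hf : ContDiff ℝ n f)
    (hn : 2 ≤ n) (j : ℕ) : Differentiable ℝ (pd j f) :=
  (contDiff_pd (m := 1) hf (by rwa [one_add_one_eq_two]) j).differentiable one_ne_zero

lemma pd_fun_add {f h : (Fin g → ℝ) → F} (hf : DifferentiableAt ℝ f t)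
    (hh : DifferentiableAt ℝ h t) : pd j (fun s => f s + h s) t = pd j f t + pd j h t := by
  unfold pd
  split_ifs
  · rw [fderiv_fun_add hf hh, add_apply]
  · rw [add_zero]

lemma pd_const_mul {f : (Fin g → ℝ) → 𝔸} (hf : DifferentiableAt ℝ f t) (c : 𝔸) :
    pd j (fun s => c * f s) t = c * pd j f t := by
  unfold pd
  split_ifs
  · rw [fderiv_const_mul hf, smul_apply, smul_eq_mul]
  · rw [mul_zero]

lemma pd_add_const_mul {f h : (Fin g → ℝ) → 𝔸} (hf : Differentiable ℝ f)
    (hh : Differentiable ℝ h) (a : 𝔸) (j : ℕ) :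
    pd j (fun s => f s + a * h s) = fun s => pd j f s + a * pd j h s := by
  funext s
  rw [pd_fun_add (hf s) ((hh s).const_mul a), pd_const_mul (hh s)]

lemma pd_fun_mul {f h : (Fin g → ℝ) → 𝔸} (hf : DifferentiableAt ℝ f t)
    (hh : DifferentiableAt ℝ h t) :
    pd j (fun s => f s * h s) t = pd j f t * h t + f t * pd j h t := by
  unfold pd
  split_ifs
  · rw [fderiv_fun_mul hf hh, add_apply, smul_apply,
      smul_apply, smul_eq_mul, smul_eq_mul, add_comm, mul_comm (h t)]
  · rw [zero_mul, mul_zero, add_zero]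

lemma pd_fun_sum {ι : Type*} {u : Finset ι} {A : ι → (Fin g → ℝ) → F}
    (hA : ∀ i ∈ u, DifferentiableAt ℝ (A i) t) :
    pd j (fun s => ∑ i ∈ u, A i s) t = ∑ i ∈ u, pd j (A i) t := by
  unfold pd
  split_ifs
  · rw [fderiv_fun_sum hA, _root_.sum_apply]
  · rw [sum_const_zero]

lemma pd_cexp {f : (Fin g → ℝ) → ℂ} (hf : DifferentiableAt ℝ f t) :
    pd j (fun s => Complex.exp (f s)) t = Complex.exp (f t) * pd j f t := by
  unfold pd
  split_ifs
  · rw [hf.hasFDerivAt.cexp.fderiv, smul_apply, smul_eq_mul]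
  · rw [mul_zero]

lemma pd_ofReal {f : (Fin g → ℝ) → ℝ} (hf : DifferentiableAt ℝ f t) :
    pd j (fun s => (f s : ℂ)) t = pd j f t := by
  unfold pd
  split_ifs
  · change fderiv ℝ (Complex.ofRealCLM ∘ f) t _ = _
    rw [(Complex.ofRealCLM.hasFDerivAt.comp t hf.hasFDerivAt).fderiv]
    rfl
  · rw [Complex.ofReal_zero]

end PartialDerivative

section Coordinate

variable {g : ℕ}

lemma contDiff_coord {n : WithTop ℕ∞} (k : ℕ) : ContDiff ℝ n (coord g k) := by
  unfold coord
  by_cases hk : 1 ≤ k ∧ k ≤ g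
  · simp only [dif_pos hk]
    exact contDiff_apply ℝ ℝ _
  · simp only [dif_neg hk]
    exact contDiff_const

lemma pd_coord (j k : ℕ) (t : Fin g → ℝ) :
    pd j (coord g k) t = if j = k ∧ 1 ≤ k ∧ k ≤ g then 1 else 0 := by
  by_cases hk : 1 ≤ k ∧ k ≤ g
  · have hcoord : coord g k = fun s => s ⟨k - 1, by omega⟩ := funext fun _ => dif_pos hk
    unfold pd
    rw [hcoord]
    split_ifs with hj hjk hjk
    · obtain ⟨rfl, -⟩ := hjk
      rw [(hasFDerivAt_apply _ t).fderiv, ContinuousLinearMap.proj_apply, Pi.single_eq_same]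
    · rw [(hasFDerivAt_apply _ t).fderiv, ContinuousLinearMap.proj_apply, Pi.single_eq_of_ne]
      simp only [ne_eq, Fin.ext_iff]
      omega
    · omega
    · rfl
  · have hcoord : coord g k = fun _ => 0 := funext fun _ => dif_neg hk
    rw [hcoord, if_neg (by tauto)]
    unfold pd
    split_ifs <;> simp

end Coordinate

section ExponentialFactor

variable {g : ℕ} {e f : (Fin g → ℝ) → ℂ} {c : ℕ → ℂ}

lemma pd_mul_of_pd_eq (he : Differentiable ℝ e) (hpd : ∀ j t, pd j e t = c j * e t)
    {j : ℕ} {t : Fin g → ℝ} (hf : DifferentiableAt ℝ f t) :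
    pd j (fun s => f s * e s) t = (pd j f t + c j * f t) * e t := by
  rw [pd_fun_mul hf (he t), hpd]
  ring

lemma pd_one_mul (he : Differentiable ℝ e) (hpd : ∀ j t, pd j e t = c j * e t)
    (hc1 : c 1 = 0) (hf : Differentiable ℝ f) :
    pd 1 (fun s => f s * e s) = fun s => pd 1 f s * e s := by
  funext s
  rw [pd_mul_of_pd_eq he hpd (hf s), hc1, zero_mul, add_zero]

lemma opLC_mul (he : Differentiable ℝ e) (hpd : ∀ j t, pd j e t = c j * e t)
    (hc1 : c 1 = 0) (hf : ContDiff ℝ 2 f) (u : ℕ → (Fin g → ℝ) → ℝ) (t : Fin g → ℝ) :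
    opLC u (fun s => f s * e s) t = opLC u f t * e t := by
  unfold opLC
  rw [pd_one_mul he hpd hc1 (hf.differentiable two_ne_zero),
    pd_one_mul he hpd hc1 (differentiable_pd hf le_rfl 1),
    sub_mul, smul_mul_assoc]

lemma pd_one_pd_one_pd_mul (he : Differentiable ℝ e) (hpd : ∀ j t, pd j e t = c j * e t)
    (hc1 : c 1 = 0) (hf : ContDiff ℝ 3 f) (k : ℕ) (t : Fin g → ℝ) :
    pd 1 (pd 1 (pd k (fun s => f s * e s))) t
      = (pd 1 (pd 1 (pd k f)) t + c k * pd 1 (pd 1 f) t) * e t := by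
  have hfk : ContDiff ℝ 2 (pd k f) := contDiff_pd hf (by norm_num) k
  have hfd : Differentiable ℝ f := hf.differentiable (by norm_num)
  have hfkd : Differentiable ℝ (pd k f) := hfk.differentiable (by norm_num)
  have hf1d : Differentiable ℝ (pd 1 f) := differentiable_pd hf (by norm_num) 1
  have hfk1d : Differentiable ℝ (pd 1 (pd k f)) := differentiable_pd hfk le_rfl 1
  have hpdk : pd k (fun s => f s * e s) = fun s => (pd k f s + c k * f s) * e s :=
    funext fun s => pd_mul_of_pd_eq he hpd (hfd s)
  rw [hpdk, pd_one_mul (f := fun s => pd k f s + c k * f s) he hpd hc1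
      (hfkd.add (hfd.const_mul _)), pd_add_const_mul hfkd hfd,
    pd_one_mul (f := fun s => pd 1 (pd k f) s + c k * pd 1 f s) he hpd hc1
      (hfk1d.add (hf1d.const_mul _)), pd_add_const_mul hfk1d hf1d]

lemma opAC_mul (he : Differentiable ℝ e) (hpd : ∀ j t, pd j e t = c j * e t)
    (hc1 : c 1 = 0) (hf : ContDiff ℝ 3 f) {u : ℕ → (Fin g → ℝ) → ℝ} {k : ℕ} {t : Fin g → ℝ}
    (hu1 : DifferentiableAt ℝ (u 1) t) (huk : DifferentiableAt ℝ (u k) t) :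
    opAC u k (fun s => f s * e s) t = (opAC u k f t + c k * opLC u f t) * e t := by
  have hfd : Differentiable ℝ f := hf.differentiable (by norm_num)
  unfold opAC opLC
  simp_rw [← smul_mul_assoc]
  rw [pd_one_pd_one_pd_mul he hpd hc1 hf, pd_mul_of_pd_eq he hpd (hfd t),
    pd_mul_of_pd_eq (f := fun s => u 1 s • f s) he hpd (hu1.smul (hfd t)),
    pd_mul_of_pd_eq he hpd (hfd t),
    pd_mul_of_pd_eq (f := fun s => u k s • f s) he hpd (huk.smul (hfd t)), hc1]
  simp only [Complex.real_smul]
  push_cast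
  ring

lemma opUC_mul (he : Differentiable ℝ e) (hpd : ∀ j t, pd j e t = c j * e t)
    (hc1 : c 1 = 0) (hf : ContDiff ℝ 3 f) {u : ℕ → (Fin g → ℝ) → ℝ} {k : ℕ} {t : Fin g → ℝ}
    (hu1 : DifferentiableAt ℝ (u 1) t) (huk : DifferentiableAt ℝ (u k) t) :
    opUC u k (fun s => f s * e s) t
      = (opUC u k f t + c k * opLC u f t - c (k + 1) * f t) * e t := by
  unfold opUC
  rw [opAC_mul he hpd hc1 hf hu1 huk, pd_mul_of_pd_eq he hpd (hf.differentiable (by norm_num) t)]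
  ring

end ExponentialFactor

section Twist

variable {g : ℕ}

noncomputable def twistPhase (g : ℕ) (γ : ℕ → ℂ) (t : Fin g → ℝ) : ℂ :=
  ∑ k ∈ Icc 2 g, γ k * (coord g k t : ℂ)

lemma twist_eq_mul (γ : ℕ → ℂ) (Φ : (Fin g → ℝ) → ℂ) :
    twist γ Φ = fun t => Φ t * Complex.exp (twistPhase g γ t) :=
  rfl

lemma differentiable_ofReal_coord (k : ℕ) : Differentiable ℝ (fun t => (coord g k t : ℂ)) :=
  (Complex.ofRealCLM.contDiff.comp (contDiff_coord k)).differentiable one_ne_zero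

lemma differentiable_twistPhase (γ : ℕ → ℂ) : Differentiable ℝ (twistPhase g γ) :=
  Differentiable.fun_sum fun k _ => (differentiable_ofReal_coord k).const_mul (γ k)

lemma pd_twistPhase (γ : ℕ → ℂ) (j : ℕ) (t : Fin g → ℝ) :
    pd j (twistPhase g γ) t = if j ∈ Icc 2 g then γ j else 0 := by
  calc pd j (twistPhase g γ) t
      = ∑ k ∈ Icc 2 g, γ k * ((pd j (coord g k) t : ℝ) : ℂ) := by
        unfold twistPhase
        rw [pd_fun_sum fun k _ => (differentiable_ofReal_coord k t).const_mul _]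
        refine sum_congr rfl fun k _ => ?_
        rw [pd_const_mul (differentiable_ofReal_coord k t),
          pd_ofReal ((contDiff_coord k).differentiable one_ne_zero t)]
    _ = ∑ k ∈ Icc 2 g, if j = k then γ k else 0 := by
        refine sum_congr rfl fun k hk => ?_
        rw [mem_Icc] at hk
        rw [pd_coord]
        split_ifs <;> simp_all
    _ = if j ∈ Icc 2 g then γ j else 0 := sum_ite_eq _ _ _

lemma pd_exp_twistPhase (γ : ℕ → ℂ) (j : ℕ) (t : Fin g → ℝ) :
    pd j (fun s => Complex.exp (twistPhase g γ s)) t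
      = (if j ∈ Icc 2 g then γ j else 0) * Complex.exp (twistPhase g γ t) := by
  rw [pd_cexp (differentiable_twistPhase γ t), pd_twistPhase, mul_comm]

lemma ite_mem_Icc_two_eq_self {γ : ℕ → ℂ} (hγ1 : γ 1 = 0) (hγtop : γ (g + 1) = 0) {k : ℕ}
    (hk1 : 1 ≤ k) (hk2 : k ≤ g + 1) : (if k ∈ Icc 2 g then γ k else 0) = γ k := by
  by_cases hk : k ∈ Icc 2 g
  · rw [if_pos hk]
  · rw [if_neg hk]
    rw [mem_Icc] at hk
    obtain rfl | rfl : k = 1 ∨ k = g + 1 := by omega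
    exacts [hγ1.symm, hγtop.symm]

end Twist

theorem statement11_general (g : ℕ) (u : ℕ → (Fin g → ℝ) → ℝ)
    (hu : ∀ i, ContDiff ℝ (⊤ : ℕ∞) (u i))
    (E : ℂ) (α γ : ℕ → ℂ) (hγ1 : γ 1 = 0) (hγtop : γ (g+1) = 0)
    (Φ : (Fin g → ℝ) → ℂ) (hΦ : ContDiff ℝ (⊤ : ℕ∞) Φ)
    (hL : ∀ t, opLC u Φ t = E * Φ t)
    (hU : ∀ k, 1 ≤ k → k ≤ g → ∀ t, opUC u k Φ t = α k * Φ t) :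
    (∀ t, opLC u (twist γ Φ) t = E * twist γ Φ t)
    ∧ (∀ k, 1 ≤ k → k ≤ g → ∀ t,
        opUC u k (twist γ Φ) t = (α k + E * γ k - γ (k+1)) * twist γ Φ t) := by
  have he : Differentiable ℝ (fun s => Complex.exp (twistPhase g γ s)) :=
    (differentiable_twistPhase γ).cexp
  have hpd := pd_exp_twistPhase (g := g) γ
  have hc1 : (if 1 ∈ Icc 2 g then γ 1 else 0) = 0 := by simp
  have hΦ3 : ContDiff ℝ 3 Φ := hΦ.of_le (WithTop.coe_le_coe.2 le_top)
  have hdu (i : ℕ) (t : Fin g → ℝ) : DifferentiableAt ℝ (u i) t :=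
    (hu i).differentiable (by simp) t
  rw [twist_eq_mul]
  refine ⟨fun t => ?_, fun k hk1 hk2 t => ?_⟩
  · rw [opLC_mul he hpd hc1 (hΦ3.of_le (by norm_num)), hL, mul_assoc]
  · rw [opUC_mul he hpd hc1 hΦ3 (hdu 1 t) (hdu k t), hU k hk1 hk2, hL,
      ite_mem_Icc_two_eq_self hγ1 hγtop hk1 (by omega),
      ite_mem_Icc_two_eq_self hγ1 hγtop (by omega) (by omega)]
    ring

/-- Let `E, α_1, …, α_g, γ_2, …, γ_g` be complex constants with
`γ_1 = 0` and `γ_{g+1} = 0`. If a smooth `Φ` satisfies `𝓛Φ = E·Φ` and `𝓤_kΦ = α_k·Φ`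
for `k = 1, …, g`, then `Φ̃ = Φ·exp(γ_2 t_2 + … + γ_g t_g)` satisfies `𝓛Φ̃ = E·Φ̃` and
`𝓤_kΦ̃ = (α_k + E·γ_k − γ_{k+1})·Φ̃` for all `k = 1, …, g`. -/
theorem statement11 (g : ℕ) (hg : 1 ≤ g) (u : ℕ → (Fin g → ℝ) → ℝ)
    (hu : ∀ i, ContDiff ℝ (⊤ : ℕ∞) (u i))
    (E : ℂ) (α γ : ℕ → ℂ) (hγ1 : γ 1 = 0) (hγtop : γ (g+1) = 0)
    (Φ : (Fin g → ℝ) → ℂ) (hΦ : ContDiff ℝ (⊤ : ℕ∞) Φ)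
    (hL : ∀ t, opLC u Φ t = E * Φ t)
    (hU : ∀ k, 1 ≤ k → k ≤ g → ∀ t, opUC u k Φ t = α k * Φ t) :
    (∀ t, opLC u (twist γ Φ) t = E * twist γ Φ t)
    ∧ (∀ k, 1 ≤ k → k ≤ g → ∀ t,
        opUC u k (twist γ Φ) t = (α k + E * γ k - γ (k+1)) * twist γ Φ t) :=
  statement11_general g u hu E α γ hγ1 hγtop Φ hΦ hL hU
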